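/- Let S ⊆ {0,1}^d be downward closed and contain 0 (an independence system), and suppose for x, y ∈ S with |x| > |y| there exists i with x_i = 1, y_i = 0, and y + e_i ∈ S (so S is a matroid). Then for any two matrices x, y ∈ ↑_n S with |x| > |y| (total number of ones), there exists a position (i,j) with x_{i,j} = 1, y_{i,j'} = 0 for all j', and y + e_{(i,j)} ∈ ↑_n S for some column index j; in particular ↑_n S satisfies the matroid exchange axiom. -/

import Mathlib

/-! Membership of a matrix in `↑ₙ S` only depends on its vector of row sums, so the exchange
step for matrices is the exchange step of `S` applied to the row sums: the new one is placed in
an empty row `i` at any column `j` where the row `i` of `x` has its one. -/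

def IsMatroid {E : Type*} [Fintype E] [DecidableEq E] (S : Set (E → ℕ)) : Prop :=
  (∀ z ∈ S, ∀ i, z i ≤ 1) ∧
  ((fun _ => 0) ∈ S) ∧
  (∀ x ∈ S, ∀ y : E → ℕ, (∀ i, y i ≤ x i) → y ∈ S) ∧
  (∀ x ∈ S, ∀ y ∈ S, (∑ i, y i) < (∑ i, x i) →
    ∃ i, x i = 1 ∧ y i = 0 ∧ Function.update y i 1 ∈ S)

def Lift (d n : ℕ) (S : Set (Fin d → ℕ)) : Set (Fin d × Fin n → ℕ) :=
  {x | (fun i => ∑ j, x (i, j)) ∈ S}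

section RowSum

variable {ι κ M : Type*} [Fintype κ]

def rowSum [AddCommMonoid M] (y : ι × κ → M) (i : ι) : M :=
  ∑ j, y (i, j)

theorem mem_lift_iff {d n : ℕ} {S : Set (Fin d → ℕ)} {x : Fin d × Fin n → ℕ} :
    x ∈ Lift d n S ↔ rowSum x ∈ S :=
  Iff.rfl

theorem sum_rowSum [Fintype ι] [AddCommMonoid M] (y : ι × κ → M) :
    ∑ i, rowSum y i = ∑ p, y p :=
  (Fintype.sum_prod_type y).symm

theorem rowSum_eq_zero_iff {y : ι × κ → ℕ} {i : ι} :
    rowSum y i = 0 ↔ ∀ j, y (i, j) = 0 := by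
  simp [rowSum]

theorem exists_eq_one_of_rowSum_eq_one {y : ι × κ → ℕ} {i : ι} (h : rowSum y i = 1) :
    ∃ j, y (i, j) = 1 := by
  obtain ⟨j, -, hj⟩ := Finset.exists_ne_zero_of_sum_ne_zero (h.symm ▸ one_ne_zero)
  refine ⟨j, le_antisymm ?_ (Nat.one_le_iff_ne_zero.mpr hj)⟩
  exact h ▸ Finset.single_le_sum (f := fun j => y (i, j)) (by simp) (Finset.mem_univ j)

theorem rowSum_update_of_row_eq_zero [DecidableEq ι] [DecidableEq κ] [AddCommMonoid M]
    {y : ι × κ → M} {i : ι} (hrow : ∀ j, y (i, j) = 0) (j : κ) (a : M) :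
    rowSum (Function.update y (i, j) a) = Function.update (rowSum y) i a := by
  funext i'
  rcases eq_or_ne i' i with rfl | hne
  · rw [Function.update_self, rowSum, Finset.sum_eq_single j]
    · simp
    · intro j' _ hj'
      rw [Function.update_of_ne (by simp [hj']), hrow]
    · simp
  · simp only [rowSum, Function.update_of_ne hne]
    exact Finset.sum_congr rfl fun j' _ => Function.update_of_ne (by simp [hne]) _ _

end RowSum

/-- The exchange axiom for the `n`-lift of a matroid: if `x, y ∈ ↑ₙ S` with `|x| > |y|`,
then there are `i, j` with `x_{i,j} = 1`, row `i` of `y` all zero, and adding a one to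
`y` at `(i,j)` keeps it in `↑ₙ S`. -/
theorem stmt16 (d n : ℕ) (S : Set (Fin d → ℕ)) (hM : IsMatroid S)
    (x y : Fin d × Fin n → ℕ) (hx : x ∈ Lift d n S) (hy : y ∈ Lift d n S)
    (hxy : (∑ p, y p) < ∑ p, x p) :
    ∃ (i : Fin d) (j : Fin n), x (i, j) = 1 ∧ (∀ j', y (i, j') = 0) ∧
      Function.update y (i, j) 1 ∈ Lift d n S := by
  obtain ⟨-, -, -, exchange⟩ := hM
  rw [← sum_rowSum, ← sum_rowSum] at hxy
  obtain ⟨i, hxi, hyi, hupdate⟩ := exchange _ hx _ hy hxy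
  obtain ⟨j, hxij⟩ := exists_eq_one_of_rowSum_eq_one hxi
  have hrow : ∀ j', y (i, j') = 0 := rowSum_eq_zero_iff.mp hyi
  refine ⟨i, j, hxij, hrow, ?_⟩
  rwa [mem_lift_iff, rowSum_update_of_row_eq_zero hrow]
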